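/- arXiv:2009.03069 — 2 statements merged into one kernel-verified Lean document; each statement's English description precedes it below -/
import Mathlib

section
/- For a subring T of R the following are equivalent: (a) T has the Skolem property; (b) for every proper ideal A of T, the family {S(a) | a ∈ A} has the finite intersection property in B, i.e. S(a^(1)) ∧ … ∧ S(a^(n)) ≠ 0_B for all a^(1),…,a^(n) ∈ A; (c) every proper ideal of T is contained in an ideal of the form (U)^T for some ultrafilter U in B; (d) every maximal ideal of T is of the form (U)^T for some ultrafilter U in B. -/
/-!
Common setup: `Λ` is an index set, `D λ` a family of commutative rings,
`R = ∏ λ, D λ` the product ring, and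
`B = ∏ λ, P(max (D λ))` the product Boolean algebra of the power sets of the
sets of maximal ideals, realized as the Pi type `∀ l, Set (MaximalSpectrum (D l))`
with its componentwise Boolean algebra structure (meet = componentwise ∩,
join = componentwise ∪, `⊥ = (∅)_λ`, complement componentwise, order = componentwise ⊆).
-/

variable {Λ : Type*} {D : Λ → Type*}

/-- `S(a) = (V(a_λ))_λ ∈ B`, where `V(x)` is the set of maximal ideals containing `x`. -/
def SFam [∀ l, CommRing (D l)] (a : ∀ l, D l) : ∀ l, Set (MaximalSpectrum (D l)) :=
  fun l => {P | a l ∈ P.asIdeal}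

/-- `z(x) = {λ | x_λ = 0}`. -/
def ZFam [∀ l, CommRing (D l)] (x : ∀ l, D l) : Set Λ := {l | x l = 0}

/-- A filter in a Boolean algebra: a nonempty subset not containing `⊥`, closed
under meets, and upward closed. -/
def IsBFilter {B : Type*} [BooleanAlgebra B] (U : Set B) : Prop :=
  U.Nonempty ∧ ⊥ ∉ U ∧ (∀ X ∈ U, ∀ Y ∈ U, X ⊓ Y ∈ U) ∧ (∀ Y ∈ U, ∀ Z, Y ≤ Z → Z ∈ U)

/-- An ultrafilter in a Boolean algebra: a filter containing `Y` or `Yᶜ` for every `Y`. -/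
def IsBUltrafilter {B : Type*} [BooleanAlgebra B] (U : Set B) : Prop :=
  IsBFilter U ∧ ∀ Y, Y ∈ U ∨ Yᶜ ∈ U

/-- Property (+): for all `r` and all nonzero `a` there is `d` lying in every maximal
ideal containing `a` but not `r`, and in no maximal ideal containing `r`. -/
def PropertyPlus (A : Type*) [CommRing A] : Prop :=
  ∀ r a : A, a ≠ 0 → ∃ d : A,
    (∀ M : Ideal A, M.IsMaximal → a ∈ M → r ∉ M → d ∈ M) ∧
    (∀ M : Ideal A, M.IsMaximal → r ∈ M → d ∉ M)

/-- Property (++): for every `r` there is `d` with `D(r) = V(d)`, i.e. the maximal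
ideals containing `d` are exactly those not containing `r`. -/
def PropertyPlusPlus (A : Type*) [CommRing A] : Prop :=
  ∀ r : A, ∃ d : A, ∀ P : MaximalSpectrum A, d ∈ P.asIdeal ↔ r ∉ P.asIdeal

/-- The Skolem property for a subring `T ⊆ R`: whenever finitely many elements of `T`
generate componentwise the unit ideal of every `D l`, they generate the unit ideal
of `T`. -/
def HasSkolem [∀ l, CommRing (D l)] (T : Subring (∀ l, D l)) : Prop :=
  ∀ (n : ℕ) (a : Fin (n + 1) → T),
    (∀ l, Ideal.span (Set.range fun i => ((a i : ∀ m, D m) l)) = ⊤) →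
      Ideal.span (Set.range a) = (⊤ : Ideal T)

/-!
`S` sends sums below meets and multiples above, so for a filter `U` the set `(U)^T` is an
ideal of `T`, proper because `S(1) = 0_B`. Since an ideal is proper exactly when it lies in a
maximal ideal, `S(a¹) ∧ ⋯ ∧ S(aⁿ) = 0_B` means that the `aⁱ_λ` generate `D_λ` for every `λ`;
this turns the Skolem property into the finite intersection property of proper ideals. A family
with the finite intersection property lies in an ultrafilter by the prime ideal theorem for
Boolean algebras (the complement of a prime order ideal is an ultrafilter), and a maximal ideal
lying in the proper ideal `(U)^T` equals it.
-/

section BooleanFilters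

variable {B ι : Type*}

theorem IsBFilter.top_mem [BooleanAlgebra B] {U : Set B} (hU : IsBFilter U) : ⊤ ∈ U :=
  let ⟨X, hX⟩ := hU.1
  hU.2.2.2 X hX ⊤ le_top

theorem IsBFilter.iInf_mem [CompleteBooleanAlgebra B] {U : Set B} (hU : IsBFilter U)
    [Fintype ι] {f : ι → B} (hf : ∀ i, f i ∈ U) : ⨅ i, f i ∈ U := by
  rw [← Finset.inf_univ_eq_iInf]
  exact Finset.inf_induction hU.top_mem (fun X hX Y hY => hU.2.2.1 X hX Y hY)
    fun i _ => hf i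

theorem Order.Ideal.IsPrime.isBUltrafilter_compl [BooleanAlgebra B] {J : Order.Ideal B}
    (hJ : J.IsPrime) : IsBUltrafilter (J : Set B)ᶜ :=
  ⟨⟨⟨⊤, hJ.top_notMem⟩, not_not_intro J.bot_mem,
    fun _ hX _ hY hXY => (hJ.mem_or_mem hXY).elim hX hY,
    fun _ hY _ hYZ hZ => hY (J.lower hYZ hZ)⟩, fun _ => hJ.notMem_or_compl_notMem⟩

theorem IsBFilter.exists_isBUltrafilter_superset [BooleanAlgebra B] {F : Set B}
    (hF : IsBFilter F) : ∃ U, IsBUltrafilter U ∧ F ⊆ U := by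
  have hPF : Order.IsPFilter F := .of_def hF.1
    (fun X hX Y hY => ⟨X ⊓ Y, hF.2.2.1 X hX Y hY, inf_le_left, inf_le_right⟩)
    fun hXY hX => hF.2.2.2 _ hX _ hXY
  have hdisj : Disjoint (hPF.toPFilter : Set B) (⊥ : Order.Ideal B) := by
    refine Set.disjoint_left.mpr fun X hX hX' => hF.2.1 ?_
    rwa [← le_bot_iff.mp (Order.Ideal.mem_principal.mp hX')]
  obtain ⟨J, hJ, -, hFJ⟩ := DistribLattice.prime_ideal_of_disjoint_filter_ideal hdisj
  exact ⟨_, hJ.isBUltrafilter_compl, Set.subset_compl_iff_disjoint_right.mpr hFJ⟩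


theorem Finset.exists_fin_succ_iInf_eq_inf [CompleteLattice B] (G : ι → B) {s : Finset ι}
    (hs : s.Nonempty) : ∃ n, ∃ f : Fin (n + 1) → ι, ⨅ k, G (f k) = s.inf G := by
  obtain ⟨n, f, hf⟩ := s.finite_toSet.fin_embedding
  obtain ⟨m, rfl⟩ : ∃ m, n = m + 1 := Nat.exists_eq_succ_of_ne_zero <| by
    rintro rfl
    simp [← Finset.coe_nonempty, ← hf] at hs
  refine ⟨m, f, ?_⟩
  rw [Finset.inf_eq_iInf, ← iInf_range (f := f), hf]
  rfl

theorem exists_isBUltrafilter_forall_mem_iff [CompleteBooleanAlgebra B] [Nonempty ι]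
    (G : ι → B) :
    (∃ U, IsBUltrafilter U ∧ ∀ i, G i ∈ U) ↔ ∀ n (f : Fin (n + 1) → ι), ⨅ k, G (f k) ≠ ⊥ := by
  classical
  refine ⟨fun ⟨U, hU, hGU⟩ n f hbot => hU.1.2.1 (hbot ▸ hU.1.iInf_mem fun k => hGU (f k)),
    fun hG => ?_⟩
  set F : Set B := {Z | ∃ s : Finset ι, s.inf G ≤ Z}
  have hF : IsBFilter F := by
    refine ⟨⟨⊤, ∅, le_top⟩, ?_, ?_, ?_⟩
    · rintro ⟨s, hs⟩
      obtain ⟨i⟩ := ‹Nonempty ι›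
      obtain ⟨n, f, hf⟩ := Finset.exists_fin_succ_iInf_eq_inf G (s.insert_nonempty i)
      exact hG n f (le_bot_iff.mp (hf ▸ (Finset.inf_mono (s.subset_insert i)).trans hs))
    · rintro X ⟨s, hs⟩ Y ⟨t, ht⟩
      exact ⟨s ∪ t, Finset.inf_union.trans_le (inf_le_inf hs ht)⟩
    · rintro Y ⟨s, hs⟩ Z hYZ
      exact ⟨s, hs.trans hYZ⟩
  obtain ⟨U, hU, hFU⟩ := hF.exists_isBUltrafilter_superset
  exact ⟨U, hU, fun i => hFU ⟨{i}, (Finset.inf_singleton ..).le⟩⟩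

end BooleanFilters

section SFam

variable [∀ l, CommRing (D l)]

theorem sFam_zero : SFam (0 : ∀ l, D l) = ⊤ := by
  funext l
  ext P
  simp [SFam]

theorem sFam_one : SFam (1 : ∀ l, D l) = ⊥ := by
  funext l
  ext P
  simpa [SFam] using (Ideal.ne_top_iff_one _).mp P.isMaximal.ne_top

theorem inf_le_sFam_add (a b : ∀ l, D l) : SFam a ⊓ SFam b ≤ SFam (a + b) :=
  fun _ P hP => P.asIdeal.add_mem hP.1 hP.2

theorem sFam_le_sFam_mul (a b : ∀ l, D l) : SFam b ≤ SFam (a * b) :=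
  fun l P hP => P.asIdeal.mul_mem_left (a l) hP

theorem iInf_sFam_eq_bot_iff {ι : Type*} (a : ι → ∀ l, D l) :
    ⨅ i, SFam (a i) = ⊥ ↔ ∀ l, Ideal.span (Set.range fun i => a i l) = ⊤ := by
  have hmem : ∀ l (P : MaximalSpectrum (D l)),
      P ∈ (⨅ i, SFam (a i)) l ↔ Ideal.span (Set.range fun i => a i l) ≤ P.asIdeal := by
    intro l P
    simp [SFam, Ideal.span_le, Set.range_subset_iff]
  refine funext_iff.trans (forall_congr' fun l => ⟨fun hbot => ?_, fun htop => ?_⟩)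
  · by_contra hne
    obtain ⟨M, hM, hle⟩ := Ideal.exists_le_maximal _ hne
    simpa [hbot] using (hmem l ⟨M, hM⟩).mpr hle
  · ext P
    rw [hmem, htop, top_le_iff]
    simpa using P.isMaximal.ne_top

end SFam

section Subring

variable [∀ l, CommRing (D l)] {T : Subring (∀ l, D l)}

/-- The ideal `(U)^T` of the paper. -/
def IsBFilter.sFamIdeal {U : Set (∀ l, Set (MaximalSpectrum (D l)))} (hU : IsBFilter U)
    (T : Subring (∀ l, D l)) : Ideal T where
  carrier := {a | SFam (a : ∀ l, D l) ∈ U}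
  zero_mem' := by simpa [sFam_zero] using hU.top_mem
  add_mem' hx hy := hU.2.2.2 _ (hU.2.2.1 _ hx _ hy) _ (inf_le_sFam_add _ _)
  smul_mem' c _ hx := hU.2.2.2 _ hx _ (sFam_le_sFam_mul (c : ∀ l, D l) _)

theorem IsBFilter.sFamIdeal_ne_top {U : Set (∀ l, Set (MaximalSpectrum (D l)))}
    (hU : IsBFilter U) : hU.sFamIdeal T ≠ ⊤ := fun htop =>
  hU.2.1 (sFam_one (D := D) ▸ (htop ▸ Submodule.mem_top : (1 : T) ∈ hU.sFamIdeal T))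

theorem hasSkolem_iff_iInf_sFam_ne_bot :
    HasSkolem T ↔ ∀ A : Ideal T, A ≠ ⊤ → ∀ (n : ℕ) (a : Fin (n + 1) → T), (∀ i, a i ∈ A) →
      ⨅ i, SFam (a i : ∀ l, D l) ≠ ⊥ := by
  simp only [HasSkolem, ← iInf_sFam_eq_bot_iff]
  refine ⟨fun hsk A hA n a haA hbot => hA ?_, fun hfip n a hbot => ?_⟩
  · exact top_le_iff.mp (hsk n a hbot ▸ Ideal.span_le.mpr (Set.range_subset_iff.mpr haA))
  · by_contra hne
    exact hfip _ hne n a (fun i => Ideal.subset_span ⟨i, rfl⟩) hbot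

theorem iInf_sFam_ne_bot_iff_exists_isBUltrafilter (A : Ideal T) :
    (∀ (n : ℕ) (a : Fin (n + 1) → T), (∀ i, a i ∈ A) → ⨅ i, SFam (a i : ∀ l, D l) ≠ ⊥) ↔
      ∃ U, IsBUltrafilter U ∧ ∀ a : T, a ∈ A → SFam (a : ∀ l, D l) ∈ U := by
  refine Iff.trans ?_ ((exists_isBUltrafilter_forall_mem_iff
    fun a : A => SFam ((a : T) : ∀ l, D l)).symm.trans ?_)
  · exact ⟨fun h n a => h n (fun i => a i) fun i => (a i).2,
      fun h n a haA => h n fun i => ⟨a i, haA i⟩⟩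
  · exact exists_congr fun U => and_congr_right' ⟨fun h a ha => h ⟨a, ha⟩, fun h a => h a a.2⟩

theorem forall_exists_isBUltrafilter_iff :
    (∀ A : Ideal T, A ≠ ⊤ → ∃ U : Set (∀ l, Set (MaximalSpectrum (D l))),
        IsBUltrafilter U ∧ ∀ a : T, a ∈ A → SFam (a : ∀ l, D l) ∈ U) ↔
      ∀ M : Ideal T, M.IsMaximal → ∃ U : Set (∀ l, Set (MaximalSpectrum (D l))),
        IsBUltrafilter U ∧ ∀ a : T, a ∈ M ↔ SFam (a : ∀ l, D l) ∈ U := by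
  refine ⟨fun h M hM => ?_, fun h A hA => ?_⟩
  · obtain ⟨U, hU, hMU⟩ := h M hM.ne_top
    have hMeq : M = hU.1.sFamIdeal T := hM.eq_of_le hU.1.sFamIdeal_ne_top hMU
    exact ⟨U, hU, fun a => by rw [hMeq]; rfl⟩
  · obtain ⟨M, hM, hAM⟩ := Ideal.exists_le_maximal A hA
    obtain ⟨U, hU, hMU⟩ := h M hM
    exact ⟨U, hU, fun a ha => (hMU a).mp (hAM ha)⟩

end Subring

theorem stmt_1_general [∀ l, CommRing (D l)]
    (T : Subring (∀ l, D l)) :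
    (HasSkolem T ↔
      (∀ A : Ideal T, A ≠ ⊤ → ∀ (n : ℕ) (a : Fin (n + 1) → T), (∀ i, a i ∈ A) →
        (⨅ i, SFam ((a i : ∀ l, D l))) ≠ ⊥)) ∧
    ((∀ A : Ideal T, A ≠ ⊤ → ∀ (n : ℕ) (a : Fin (n + 1) → T), (∀ i, a i ∈ A) →
        (⨅ i, SFam ((a i : ∀ l, D l))) ≠ ⊥) ↔
      (∀ A : Ideal T, A ≠ ⊤ → ∃ U : Set (∀ l, Set (MaximalSpectrum (D l))),
        IsBUltrafilter U ∧ ∀ a : T, a ∈ A → SFam (a : ∀ l, D l) ∈ U)) ∧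
    ((∀ A : Ideal T, A ≠ ⊤ → ∃ U : Set (∀ l, Set (MaximalSpectrum (D l))),
        IsBUltrafilter U ∧ ∀ a : T, a ∈ A → SFam (a : ∀ l, D l) ∈ U) ↔
      (∀ M : Ideal T, M.IsMaximal → ∃ U : Set (∀ l, Set (MaximalSpectrum (D l))),
        IsBUltrafilter U ∧ ∀ a : T, a ∈ M ↔ SFam (a : ∀ l, D l) ∈ U)) :=
  ⟨hasSkolem_iff_iInf_sFam_ne_bot,
    forall₂_congr fun A _ => iInf_sFam_ne_bot_iff_exists_isBUltrafilter A,
    forall_exists_isBUltrafilter_iff⟩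

/-- Equivalence of: (a) `T` has the Skolem property; (b) for every proper ideal `A` of
`T` the family of the `S a` for `a ∈ A` has the finite intersection property in `B`;
(c) every proper ideal of `T` is contained in an ideal `(U)^T` for some ultrafilter `U`
in `B`; (d) every maximal ideal of `T` is of the form `(U)^T` for some ultrafilter `U`
in `B`. -/
theorem stmt_1 [∀ l, CommRing (D l)] [∀ l, Nontrivial (D l)]
    (T : Subring (∀ l, D l)) :
    (HasSkolem T ↔
      (∀ A : Ideal T, A ≠ ⊤ → ∀ (n : ℕ) (a : Fin (n + 1) → T), (∀ i, a i ∈ A) →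
        (⨅ i, SFam ((a i : ∀ l, D l))) ≠ ⊥)) ∧
    ((∀ A : Ideal T, A ≠ ⊤ → ∀ (n : ℕ) (a : Fin (n + 1) → T), (∀ i, a i ∈ A) →
        (⨅ i, SFam ((a i : ∀ l, D l))) ≠ ⊥) ↔
      (∀ A : Ideal T, A ≠ ⊤ → ∃ U : Set (∀ l, Set (MaximalSpectrum (D l))),
        IsBUltrafilter U ∧ ∀ a : T, a ∈ A → SFam (a : ∀ l, D l) ∈ U)) ∧
    ((∀ A : Ideal T, A ≠ ⊤ → ∃ U : Set (∀ l, Set (MaximalSpectrum (D l))),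
        IsBUltrafilter U ∧ ∀ a : T, a ∈ A → SFam (a : ∀ l, D l) ∈ U) ↔
      (∀ M : Ideal T, M.IsMaximal → ∃ U : Set (∀ l, Set (MaximalSpectrum (D l))),
        IsBUltrafilter U ∧ ∀ a : T, a ∈ M ↔ SFam (a : ∀ l, D l) ∈ U)) :=
  stmt_1_general T
end

section
/- Let (D_λ)_{λ∈Λ} be a family of integral domains, T a subring of R = ∏_{λ∈Λ} D_λ, and F an ultrafilter on Λ. Then (0)_F^T = {x ∈ T | z(x) ∈ F} is a prime ideal of T. Moreover, every minimal prime ideal of T is of the form (0)_G^T for some ultrafilter G on Λ. -/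
/-!
Common setup: `Λ` is an index set, `D λ` a family of commutative rings,
`R = ∏ λ, D λ` the product ring, and
`B = ∏ λ, P(max (D λ))` the product Boolean algebra of the power sets of the
sets of maximal ideals, realized as the Pi type `∀ l, Set (MaximalSpectrum (D l))`
with its componentwise Boolean algebra structure (meet = componentwise ∩,
join = componentwise ∪, `⊥ = (∅)_λ`, complement componentwise, order = componentwise ⊆).
-/

variable {Λ : Type*} {D : Λ → Type*}

/-!
Since the `D λ` are domains, `z(xy) = z(x) ∪ z(y)`, and an ultrafilter contains a union only if it
contains one of the pieces; so `(0)_F` is prime in `R`, and so is its trace on `T`.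

Conversely, let `P` be a minimal prime of `T`. As `T` is reduced, every `x ∈ P` is killed by some
`y ∉ P`, so `z(x)` contains the support `z(y)ᶜ`. The supports of the elements of `T ∖ P` form a
filter basis (`T ∖ P` is multiplicatively closed and avoids `0`); any ultrafilter `G` refining it
contains `z(x)` for `x ∈ P` and `z(x)ᶜ` for `x ∉ P`, i.e. `P = (0)_G^T`.
-/

open Set

section ProductRing

variable [∀ l, CommRing (D l)]

lemma zFam_zero : ZFam (0 : ∀ l, D l) = univ := by
  ext l; simp [ZFam]

lemma zFam_one [∀ l, Nontrivial (D l)] : ZFam (1 : ∀ l, D l) = ∅ := by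
  ext l; simp [ZFam]

lemma zFam_eq_univ_iff {x : ∀ l, D l} : ZFam x = univ ↔ x = 0 := by
  simp [ZFam, eq_univ_iff_forall, funext_iff]

lemma inter_subset_zFam_add (x y : ∀ l, D l) : ZFam x ∩ ZFam y ⊆ ZFam (x + y) := by
  rintro l ⟨hx, hy⟩
  simp_all [ZFam]

lemma union_subset_zFam_mul (x y : ∀ l, D l) : ZFam x ∪ ZFam y ⊆ ZFam (x * y) := by
  rintro l (hx | hy) <;> simp_all [ZFam]

lemma zFam_mul [∀ l, NoZeroDivisors (D l)] (x y : ∀ l, D l) :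
    ZFam (x * y) = ZFam x ∪ ZFam y := by
  ext l; simp [ZFam]

lemma compl_zFam_subset_of_mul_eq_zero [∀ l, NoZeroDivisors (D l)] {x y : ∀ l, D l}
    (h : y * x = 0) : (ZFam y)ᶜ ⊆ ZFam x := by
  rw [compl_subset_iff_union, ← zFam_mul, h, zFam_zero]

/-- The ideal `(0)_F` of the product ring. -/
def zeroIdeal (F : Filter Λ) : Ideal (∀ l, D l) where
  carrier := {x | ZFam x ∈ F}
  zero_mem' := by simp [zFam_zero]
  add_mem' {x y} hx hy :=
    Filter.mem_of_superset (Filter.inter_mem hx hy) (inter_subset_zFam_add x y)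
  smul_mem' c x hx :=
    Filter.mem_of_superset hx (subset_union_right.trans (union_subset_zFam_mul c x))

lemma mem_zeroIdeal {F : Filter Λ} {x : ∀ l, D l} : x ∈ zeroIdeal F ↔ ZFam x ∈ F :=
  Iff.rfl

instance zeroIdeal_isPrime [∀ l, IsDomain (D l)] (F : Ultrafilter Λ) :
    (zeroIdeal (D := D) F).IsPrime where
  ne_top' h := by
    have h1 : ZFam (1 : ∀ l, D l) ∈ F := mem_zeroIdeal.mp (h ▸ Submodule.mem_top)
    rw [zFam_one] at h1
    exact F.empty_notMem h1
  mem_or_mem' {x y} hxy := by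
    rw [mem_zeroIdeal, zFam_mul] at hxy
    exact Ultrafilter.union_mem_iff.mp hxy

def supportFilter (S : Submonoid (∀ l, D l)) : Filter Λ where
  sets := {s | ∃ y ∈ S, (ZFam y)ᶜ ⊆ s}
  univ_sets := ⟨1, S.one_mem, subset_univ _⟩
  sets_of_superset := by
    rintro s t ⟨y, hy, hs⟩ hst
    exact ⟨y, hy, hs.trans hst⟩
  inter_sets := by
    rintro s t ⟨y, hy, hs⟩ ⟨z, hz, ht⟩
    refine ⟨y * z, S.mul_mem hy hz, ?_⟩
    rw [compl_subset_comm, compl_inter]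
    exact (union_subset_union (compl_subset_comm.mp hs) (compl_subset_comm.mp ht)).trans
      (union_subset_zFam_mul y z)

variable {S : Submonoid (∀ l, D l)}

lemma compl_zFam_mem_supportFilter {y : ∀ l, D l} (hy : y ∈ S) :
    (ZFam y)ᶜ ∈ supportFilter S :=
  ⟨y, hy, subset_rfl⟩

lemma supportFilter_neBot (hS : (0 : ∀ l, D l) ∉ S) : (supportFilter S).NeBot := by
  refine ⟨fun hbot => ?_⟩
  obtain ⟨y, hy, hempty⟩ : (∅ : Set Λ) ∈ supportFilter S := hbot ▸ Filter.mem_bot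
  rw [subset_empty_iff, compl_empty_iff, zFam_eq_univ_iff] at hempty
  exact hS (hempty ▸ hy)

end ProductRing

/-- The localization at `P` is reduced of dimension zero, so its maximal ideal is `0`. -/
theorem Ideal.exists_notMem_mul_eq_zero_of_mem_minimalPrimes {A : Type*} [CommRing A]
    [IsReduced A] {P : Ideal A} (hP : P ∈ minimalPrimes A) {x : A} (hx : x ∈ P) :
    ∃ y ∉ P, y * x = 0 := by
  have := hP.1.1
  have := Ring.KrullDimLE.of_isLocalization P hP (Localization.AtPrime P)
  have hx0 : algebraMap A (Localization.AtPrime P) x = 0 := by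
    rw [← Ideal.mem_bot, ← Ideal.zero_eq_bot, ← nilradical_eq_zero,
      Ring.KrullDimLE.nilradical_eq_maximalIdeal,
      IsLocalization.AtPrime.to_map_mem_maximal_iff _ P]
    exact hx
  obtain ⟨y, hy⟩ := (IsLocalization.map_eq_zero_iff P.primeCompl _ x).mp hx0
  exact ⟨y, y.2, hy⟩

theorem exists_ultrafilter_eq_comap_zeroIdeal [∀ l, CommRing (D l)] [∀ l, IsDomain (D l)]
    (T : Subring (∀ l, D l)) {P : Ideal T} (hP : P ∈ minimalPrimes T) :
    ∃ G : Ultrafilter Λ, P = (zeroIdeal (G : Filter Λ)).comap T.subtype := by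
  have := hP.1.1
  have : IsReduced T := isReduced_of_injective T.subtype Subtype.val_injective
  set S := P.primeCompl.map T.subtype
  have hS : (0 : ∀ l, D l) ∉ S := by
    rintro ⟨y, hy, hy0⟩
    exact hy ((Subtype.ext hy0 : y = 0) ▸ P.zero_mem)
  have := supportFilter_neBot hS
  have hsupp (y : T) (hy : y ∉ P) : (ZFam (y : ∀ l, D l))ᶜ ∈ Ultrafilter.of (supportFilter S) :=
    Ultrafilter.of_le _ <|
      compl_zFam_mem_supportFilter (Submonoid.mem_map_of_mem T.subtype (S := P.primeCompl) hy)
  refine ⟨.of (supportFilter S), Ideal.ext fun x => ⟨fun hx => ?_, fun hx => ?_⟩⟩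
  · obtain ⟨y, hy, hyx⟩ := Ideal.exists_notMem_mul_eq_zero_of_mem_minimalPrimes hP hx
    exact Filter.mem_of_superset (hsupp y hy)
      (compl_zFam_subset_of_mul_eq_zero (congrArg Subtype.val hyx))
  · by_contra hxP
    exact Ultrafilter.compl_mem_iff_notMem.mp (hsupp x hxP) hx

/-- If the `D l` are integral domains, `T ⊆ R` a subring and `F` an ultrafilter on
`Λ`, then the set of `x ∈ T` with `z x ∈ F` is a prime ideal of `T`; moreover every
minimal prime ideal of `T` is of this form for some ultrafilter `G` on `Λ`. -/
theorem stmt_13 [∀ l, CommRing (D l)] [∀ l, IsDomain (D l)]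
    (T : Subring (∀ l, D l)) (F : Ultrafilter Λ) :
    (∃ I : Ideal T, (∀ x : T, x ∈ I ↔ ZFam (x : ∀ l, D l) ∈ F) ∧ I.IsPrime) ∧
    (∀ P : Ideal T, P ∈ minimalPrimes T →
      ∃ G : Ultrafilter Λ, ∀ x : T, x ∈ P ↔ ZFam (x : ∀ l, D l) ∈ G) := by
  refine ⟨⟨(zeroIdeal (F : Filter Λ)).comap T.subtype, fun _ => Iff.rfl, inferInstance⟩,
    fun P hP => ?_⟩
  obtain ⟨G, rfl⟩ := exists_ultrafilter_eq_comap_zeroIdeal T hP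
  exact ⟨G, fun _ => Iff.rfl⟩
end
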